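/- Let n ≥ 1 and let ζ be an even integer with 0 < ζ ≤ n. Let |i⟩ be a computational basis state of ℂ^{2^n} with Hamming weight exactly ζ. Then for every l with 0 ≤ l ≤ n, 𝒫_{0,ζ}[Π_{2l}(|i⟩⟨0…0|)] = b_{2l} · |i⟩⟨0…0|, where b_{2l} = 2^{ζ−n}·binom(n−ζ, l−ζ/2) if ζ/2 ≤ l ≤ n−ζ/2 and b_{2l} = 0 otherwise. -/

import Mathlib

open Matrix Finset

noncomputable section

namespace QCQMC

/-- State vectors on `n` qubits, indexed by bitstrings. -/
abbrev QState (n : ℕ) := (Fin n → Bool) → ℂ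

/-- Operators (2^n × 2^n matrices) on `n` qubits. -/
abbrev QOp (n : ℕ) := Matrix (Fin n → Bool) (Fin n → Bool) ℂ

/-- Computational basis state `|b⟩`. -/
def ket (n : ℕ) (b : Fin n → Bool) : QState n := fun b' => if b' = b then 1 else 0

/-- The all-zero state `|0…0⟩`. -/
def ket0 (n : ℕ) : QState n := ket n (fun _ => false)

/-- Outer product `|u⟩⟨v|`. -/
def outer {n : ℕ} (u v : QState n) : QOp n :=
  Matrix.of fun x y => u x * (starRingEnd ℂ) (v y)

/-- Hamming weight of a bitstring. -/
def hamming {n : ℕ} (b : Fin n → Bool) : ℕ := (Finset.univ.filter fun i => b i = true).card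

/-- Jordan–Wigner Majorana operator.  The index `μ : Fin (2*n)` (0-indexed) corresponds to
`γ_{μ+1}` in 1-indexed notation:  for `μ = 2j` (0-indexed, qubit `j`) this is
`Z^{⊗j} ⊗ X ⊗ I^{⊗(n-j-1)}`, and for `μ = 2j+1` it is `Z^{⊗j} ⊗ Y ⊗ I^{⊗(n-j-1)}`. -/
def majorana (n : ℕ) (μ : Fin (2 * n)) : QOp n :=
  Matrix.of fun b b' =>
    if h : (b ⟨μ.1 / 2, by have := μ.2; omega⟩ ≠ b' ⟨μ.1 / 2, by have := μ.2; omega⟩) ∧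
        (∀ i : Fin n, i.1 ≠ μ.1 / 2 → b i = b' i) then
      (∏ i : Fin n, if i.1 < μ.1 / 2 ∧ b i = true then (-1 : ℂ) else 1) *
      (if μ.1 % 2 = 0 then 1
       else if b ⟨μ.1 / 2, by have := μ.2; omega⟩ = true then Complex.I else -Complex.I)
    else 0

/-- Majorana string `γ_S`, the product of `γ_μ` for `μ ∈ S` in ascending index order. -/
def gammaS (n : ℕ) (S : Finset (Fin (2 * n))) : QOp n :=
  ((S.sort (· ≤ ·)).map (majorana n)).prod

/-- The superoperator `Π_{2l}(A) = 2^{-n} Σ_{|S| = 2l} tr(γ_S† A) γ_S`. -/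
def PiEven (n l : ℕ) (A : QOp n) : QOp n :=
  ((2 : ℂ) ^ n)⁻¹ •
    ∑ S ∈ Finset.univ.filter (fun S : Finset (Fin (2 * n)) => S.card = 2 * l),
      (Matrix.trace ((gammaS n S)ᴴ * A)) • gammaS n S

/-- Orthogonal projector `P_{0,ζ}` onto the span of `|0…0⟩` and the computational basis
states of Hamming weight `ζ`. -/
def projZeroZeta (n ζ : ℕ) : QOp n :=
  Matrix.diagonal (fun b => if b = (fun _ => false) ∨ hamming b = ζ then 1 else 0)

/-- The coefficients `b_{2l}`. -/
def bcoef (n ζ l : ℕ) : ℂ :=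
  if ζ / 2 ≤ l ∧ l + ζ / 2 ≤ n then
    (2 : ℂ) ^ ζ / 2 ^ n * ((n - ζ).choose (l - ζ / 2)) else 0

/-- `pairs(T) = ∪_{j ∈ T} {2j-1, 2j}` (0-indexed: `{2j, 2j+1}`). -/
def pairsSet (n : ℕ) (T : Finset (Fin n)) : Finset (Fin (2 * n)) :=
  Finset.univ.filter fun μ : Fin (2 * n) => (⟨μ.1 / 2, by have := μ.2; omega⟩ : Fin n) ∈ T


-- auxiliary defs
def qub (n : ℕ) (μ : Fin (2*n)) : Fin n := ⟨μ.1 / 2, by have := μ.2; omega⟩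
def bx {n : ℕ} (f y : Fin n → Bool) : Fin n → Bool := fun j => xor (f j) (y j)
def uphase (z : ℂ) : Prop := z * (starRingEnd ℂ) z = 1
def Mono {n : ℕ} (f : Fin n → Bool) (M : QOp n) : Prop :=
  (∀ x y : Fin n → Bool, x ≠ bx f y → M x y = 0) ∧ (∀ y, uphase (M (bx f y) y))
def sing (n : ℕ) (j : Fin n) : Fin n → Bool := fun k => decide (k = j)
def maskS (n : ℕ) (S : Finset (Fin (2*n))) : Fin n → Bool :=
  fun j => decide ((S.filter fun μ => qub n μ = j).card % 2 = 1)
def maskL (n : ℕ) (L : List (Fin (2*n))) : Fin n → Bool :=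
  fun j => decide ((L.countP fun μ => decide (qub n μ = j)) % 2 = 1)

lemma uphase_mul {a b : ℂ} (ha : uphase a) (hb : uphase b) : uphase (a*b) := by
  unfold uphase at *
  rw [RingHom.map_mul]
  calc a * b * ((starRingEnd ℂ) a * (starRingEnd ℂ) b)
      = (a * (starRingEnd ℂ) a) * (b * (starRingEnd ℂ) b) := by ring
    _ = 1 := by rw [ha, hb, one_mul]

lemma uphase_one : uphase (1:ℂ) := by simp [uphase]
lemma uphase_neg {a : ℂ} (h : uphase a) : uphase (-a) := by
  unfold uphase at *; simpa using h
lemma uphase_I : uphase Complex.I := by simp [uphase, mul_comm]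
lemma uphase_ite_neg_one (p : Prop) [Decidable p] : uphase (if p then (-1:ℂ) else 1) := by
  split
  · exact uphase_neg uphase_one
  · exact uphase_one
lemma uphase_prod {α : Type*} (s : Finset α) (f : α → ℂ) (h : ∀ a ∈ s, uphase (f a)) :
    uphase (∏ a ∈ s, f a) := by
  induction s using Finset.cons_induction with
  | empty => simpa using uphase_one
  | cons a s ha ih =>
    rw [Finset.prod_cons]
    exact uphase_mul (h a (Finset.mem_cons_self a s)) (ih fun b hb => h b (Finset.mem_cons.2 (Or.inr hb)))

lemma majorana_mono (n : ℕ) (μ : Fin (2*n)) : Mono (sing n (qub n μ)) (majorana n μ) := by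
  constructor
  · intro x y hxy
    rw [majorana]
    simp only [Matrix.of_apply]
    rw [dif_neg]
    intro ⟨h1, h2⟩
    apply hxy
    funext k
    by_cases hk : k = qub n μ
    · subst hk
      simp only [bx, sing, decide_true, Bool.true_xor]
      have : x (qub n μ) ≠ y (qub n μ) := h1
      revert this; cases x (qub n μ) <;> cases y (qub n μ) <;> simp
    · have : k.1 ≠ μ.1/2 := by
        intro h; apply hk; exact Fin.ext h
      have := h2 k this
      simp only [bx, sing]
      rw [decide_eq_false hk]
      simpa using this
  · intro y
    rw [majorana]
    simp only [Matrix.of_apply]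
    rw [dif_pos]
    · apply uphase_mul
      · apply uphase_prod
        intro a _
        exact uphase_ite_neg_one _
      · split
        · exact uphase_one
        · split
          · exact uphase_I
          · exact uphase_neg uphase_I
    · constructor
      · show bx (sing n (qub n μ)) y ⟨μ.1/2, _⟩ ≠ y ⟨μ.1/2, _⟩
        have : (⟨μ.1/2, by have := μ.2; omega⟩ : Fin n) = qub n μ := rfl
        rw [this]
        simp only [bx, sing, decide_true, Bool.true_xor]
        cases y (qub n μ) <;> simp
      · intro k hk
        show bx (sing n (qub n μ)) y k = y k
        have hk' : k ≠ qub n μ := by intro h; apply hk; rw [h]; rfl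
        simp only [bx, sing]
        rw [decide_eq_false hk']
        simp

lemma mono_one (n : ℕ) : Mono (fun _ => false) (1 : QOp n) := by
  have hb : ∀ y : Fin n → Bool, bx (fun _ => false) y = y := by
    intro y; funext k; simp [bx]
  constructor
  · intro x y hxy
    rw [hb] at hxy
    simp [Matrix.one_apply, hxy]
  · intro y
    rw [hb]
    simpa [Matrix.one_apply] using uphase_one

lemma bx_assoc {n : ℕ} (f g y : Fin n → Bool) : bx f (bx g y) = bx (bx f g) y := by
  funext k; simp [bx, Bool.xor_assoc]

lemma mono_mul {n : ℕ} {f g : Fin n → Bool} {M N : QOp n}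
    (hM : Mono g M) (hN : Mono f N) : Mono (bx g f) (M * N) := by
  constructor
  · intro x y hxy
    rw [Matrix.mul_apply]
    apply Finset.sum_eq_zero
    intro z _
    by_cases hz : z = bx f y
    · subst hz
      rw [hM.1 x _ (by rw [bx_assoc]; exact hxy), zero_mul]
    · rw [hN.1 z y hz, mul_zero]
  · intro y
    rw [Matrix.mul_apply]
    rw [Finset.sum_eq_single (bx f y)]
    · rw [← bx_assoc]
      exact uphase_mul (hM.2 (bx f y)) (hN.2 y)
    · intro z _ hz
      rw [hN.1 z y hz, mul_zero]
    · intro h; exact absurd (Finset.mem_univ _) h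

lemma mono_list (n : ℕ) (L : List (Fin (2*n))) :
    Mono (maskL n L) ((L.map (majorana n)).prod) := by
  induction L with
  | nil =>
    have : maskL n [] = (fun _ => false) := by funext j; simp [maskL]
    rw [this]; simpa using mono_one n
  | cons μ L ih =>
    have hmask : maskL n (μ :: L) = bx (sing n (qub n μ)) (maskL n L) := by
      funext j
      simp only [maskL, bx, sing, List.countP_cons]
      set c := L.countP fun ν => decide (qub n ν = j) with hc
      by_cases h : qub n μ = j
      · rw [if_pos (by simpa using h)]
        have h' : j = qub n μ := h.symm
        rw [decide_eq_true h']
        by_cases hpar : c % 2 = 1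
        · have h2 : ¬ ((c+1) % 2 = 1) := by omega
          simp [hpar, h2]
        · have h2 : (c+1) % 2 = 1 := by omega
          simp [hpar, h2]
      · rw [if_neg (by simpa using h)]
        have h' : ¬ (j = qub n μ) := fun hh => h hh.symm
        rw [decide_eq_false h']
        simp
    rw [hmask, List.map_cons, List.prod_cons]
    exact mono_mul (majorana_mono n μ) ih

lemma card_filter_eq_countP_sort (n : ℕ) (S : Finset (Fin (2*n))) (q : Fin (2*n) → Prop)
    [DecidablePred q] :
    (S.filter q).card = (S.sort (· ≤ ·)).countP (fun μ => decide (q μ)) := by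
  rw [Finset.card, Finset.filter_val, ← Multiset.countP_eq_card_filter,
      ← Finset.sort_eq S (· ≤ ·), Multiset.coe_countP]

lemma gammaS_mono (n : ℕ) (S : Finset (Fin (2*n))) : Mono (maskS n S) (gammaS n S) := by
  have h : maskS n S = maskL n (S.sort (· ≤ ·)) := by
    funext j
    simp only [maskS, maskL]
    rw [card_filter_eq_countP_sort]
  rw [h, gammaS]
  exact mono_list n _


def e0 {n : ℕ} (j : Fin n) : Fin (2*n) := ⟨2*j.1, by have := j.2; omega⟩
def e1 {n : ℕ} (j : Fin n) : Fin (2*n) := ⟨2*j.1+1, by have := j.2; omega⟩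

lemma qub_e0 {n : ℕ} (j : Fin n) : qub n (e0 j) = j := by
  apply Fin.ext; simp [qub, e0]
lemma qub_e1 {n : ℕ} (j : Fin n) : qub n (e1 j) = j := by
  apply Fin.ext; simp [qub, e1]; omega
lemma e0_ne_e1 {n : ℕ} (j : Fin n) : e0 j ≠ e1 j := by
  simp [e0, e1, Fin.ext_iff]
lemma eq_e0_or_e1 {n : ℕ} (j : Fin n) (μ : Fin (2*n)) (h : qub n μ = j) :
    μ = e0 j ∨ μ = e1 j := by
  have h' : μ.1 / 2 = j.1 := congrArg Fin.val h
  rcases Nat.even_or_odd μ.1 with he | ho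
  · left; apply Fin.ext; simp [e0]; rcases he with ⟨k, hk⟩; omega
  · right; apply Fin.ext; simp [e1]; rw [Nat.odd_iff] at ho; omega

/-- fiber of S over qubit j -/
lemma fiber_card (n : ℕ) (S : Finset (Fin (2*n))) (j : Fin n) :
    (S.filter fun μ => qub n μ = j).card
      = (if e0 j ∈ S then 1 else 0) + (if e1 j ∈ S then 1 else 0) := by
  have hsub : (S.filter fun μ => qub n μ = j) = ({e0 j, e1 j} : Finset _).filter (· ∈ S) := by
    ext μ
    simp only [Finset.mem_filter, Finset.mem_insert, Finset.mem_singleton]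
    constructor
    · rintro ⟨h1, h2⟩
      exact ⟨eq_e0_or_e1 j μ h2, h1⟩
    · rintro ⟨h1, h2⟩
      refine ⟨h2, ?_⟩
      rcases h1 with rfl | rfl
      · exact qub_e0 j
      · exact qub_e1 j
  rw [hsub]
  rw [Finset.filter_insert, Finset.filter_singleton]
  by_cases h0 : e0 j ∈ S <;> by_cases h1 : e1 j ∈ S <;>
    simp [h0, h1, Finset.card_insert_of_notMem, e0_ne_e1 j]

def Dmat (n : ℕ) (j : Fin n) : QOp n :=
  Matrix.diagonal (fun b => if b j then (-1:ℂ) else 1)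

lemma Dmat_comm {n : ℕ} {j : Fin n} {f : Fin n → Bool} {M : QOp n}
    (hf : f j = false) (hM : Mono f M) : Dmat n j * M = M * Dmat n j := by
  ext x y
  rw [Dmat, Matrix.diagonal_mul, Matrix.mul_diagonal]
  by_cases hxy : x = bx f y
  · subst hxy
    have : bx f y j = y j := by simp [bx, hf]
    rw [this]
    ring
  · rw [hM.1 x y hxy]; ring

lemma majorana_e1_eq {n : ℕ} (j : Fin n) :
    majorana n (e1 j) = Complex.I • (majorana n (e0 j) * Dmat n j) := by
  ext b b'
  rw [Matrix.smul_apply, Dmat, Matrix.mul_diagonal]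
  have hv0 : ((e0 j : Fin (2*n)) : ℕ) = 2*j.1 := rfl
  have hv1 : ((e1 j : Fin (2*n)) : ℕ) = 2*j.1+1 := rfl
  have d0 : 2*j.1/2 = j.1 := by omega
  have d1 : (2*j.1+1)/2 = j.1 := by omega
  have m0 : 2*j.1 % 2 = 0 := by omega
  have m1 : ¬ ((2*j.1+1) % 2 = 0) := by omega
  simp only [majorana, Matrix.of_apply, hv0, hv1, d0, d1, m0, m1, Fin.eta, if_true, if_false]
  by_cases hcond : (b j ≠ b' j ∧ ∀ i : Fin n, i.1 ≠ j.1 → b i = b' i)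
  · have hne := hcond.1
    rw [dif_pos hcond, dif_pos hcond, smul_eq_mul, mul_one]
    cases hb : b j <;> cases hb' : b' j
    · rw [hb, hb'] at hne; simp at hne
    · simp only [if_neg (by simp : ¬ (false = true)), if_pos rfl, if_pos trivial]; ring
    · simp only [if_pos rfl, if_neg (by simp : ¬ (false = true)), if_pos trivial]; ring
    · rw [hb, hb'] at hne; simp at hne
  · rw [dif_neg hcond, dif_neg hcond, smul_eq_mul, zero_mul, mul_zero]

lemma maskL_eq_false {n : ℕ} {j : Fin n} {L : List (Fin (2*n))}
    (h : ∀ x ∈ L, qub n x ≠ j) : maskL n L j = false := by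
  simp only [maskL]
  have : (L.countP fun μ => decide (qub n μ = j)) = 0 := by
    rw [List.countP_eq_zero]
    intro a ha
    simpa using h a ha
  simp [this]

lemma Dmat_comm_list {n : ℕ} {j : Fin n} {L : List (Fin (2*n))}
    (h : ∀ x ∈ L, qub n x ≠ j) :
    Dmat n j * (L.map (majorana n)).prod = (L.map (majorana n)).prod * Dmat n j := by
  have := mono_list n L
  exact Dmat_comm (maskL_eq_false h) this

lemma gammaS_swap {n : ℕ} (j : Fin n) (S : Finset (Fin (2*n)))
    (h0 : e0 j ∈ S) (h1 : e1 j ∉ S) :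
    gammaS n (insert (e1 j) (S.erase (e0 j))) = Complex.I • (gammaS n S * Dmat n j) := by
  obtain ⟨L₁, L₂, hL⟩ := List.append_of_mem ((Finset.mem_sort (α := Fin (2*n)) (· ≤ ·)).2 h0)
  have hsorted := Finset.pairwise_sort (α := Fin (2*n)) S (· ≤ ·)
  have hnodup := Finset.sort_nodup (α := Fin (2*n)) S (· ≤ ·)
  rw [hL] at hsorted hnodup
  rw [List.pairwise_append] at hsorted
  obtain ⟨hp1, hp2, hcross⟩ := hsorted
  rw [List.pairwise_cons] at hp2
  obtain ⟨hlow, hp2'⟩ := hp2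
  rw [List.nodup_append] at hnodup
  obtain ⟨hn1, hn2, hdisj⟩ := hnodup
  rw [List.nodup_cons] at hn2
  obtain ⟨he0L2, hn2'⟩ := hn2
  have he0L1 : e0 j ∉ L₁ := fun hmem => hdisj _ hmem _ List.mem_cons_self rfl
  have hmemS : ∀ x ∈ L₂, x ∈ S := by
    intro x hx
    have : x ∈ S.sort (· ≤ ·) := by
      rw [hL]; exact List.mem_append.2 (Or.inr (List.mem_cons.2 (Or.inr hx)))
    exact (Finset.mem_sort _).1 this
  have hgt : ∀ x ∈ L₂, (e1 j : Fin (2*n)).1 + 1 ≤ x.1 := by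
    intro x hx
    have h1x : (e0 j : Fin (2*n)).1 ≤ x.1 := hlow x hx
    have h2x : x ≠ e0 j := fun h => he0L2 (h ▸ hx)
    have h3x : x ≠ e1 j := fun h => h1 (h ▸ hmemS x hx)
    have hv0 : (e0 j : Fin (2*n)).1 = 2*j.1 := rfl
    have hv1 : (e1 j : Fin (2*n)).1 = 2*j.1+1 := rfl
    rw [hv1]
    rw [hv0] at h1x
    have h2x' : x.1 ≠ 2*j.1 := fun h => h2x (Fin.ext h)
    have h3x' : x.1 ≠ 2*j.1+1 := fun h => h3x (Fin.ext h)
    omega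
  have hqubL2 : ∀ x ∈ L₂, qub n x ≠ j := by
    intro x hx h
    have := hgt x hx
    have h' : x.1 / 2 = j.1 := congrArg Fin.val h
    have hv1 : (e1 j : Fin (2*n)).1 = 2*j.1+1 := rfl
    omega
  -- identify sort of S'
  have he1erase : e1 j ∉ S.erase (e0 j) := fun h => h1 (Finset.mem_of_mem_erase h)
  have hsort' : (insert (e1 j) (S.erase (e0 j))).sort (· ≤ ·) = L₁ ++ e1 j :: L₂ := by
    refine (fun hp h1 h2 => List.Perm.eq_of_pairwise' (r := (· ≤ ·)) h1 h2 hp) ?_ ?_ ?_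
    · rw [← Multiset.coe_eq_coe, Finset.sort_eq]
      rw [Finset.insert_val_of_notMem he1erase, Finset.erase_val]
      have hSval : S.val = ↑(L₁ ++ e0 j :: L₂) := by
        rw [← Finset.sort_eq S (· ≤ ·), hL]
      rw [hSval, Multiset.coe_erase]
      rw [List.erase_append_right _ (by simpa using he0L1), List.erase_cons_head]
      rw [Multiset.cons_coe, Multiset.coe_eq_coe]
      exact (List.perm_middle).symm
    · exact Finset.pairwise_sort _ _
    · rw [List.pairwise_append]
      refine ⟨hp1, ?_, ?_⟩
      · rw [List.pairwise_cons]
        refine ⟨fun x hx => ?_, hp2'⟩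
        have := hgt x hx
        rw [Fin.le_def]; omega
      · intro a ha b hb
        rcases List.mem_cons.1 hb with rfl | hb'
        · have h2 : a ≤ e0 j := hcross a ha (e0 j) List.mem_cons_self
          rw [Fin.le_def] at h2 ⊢
          have hv0 : (e0 j : Fin (2*n)).1 = 2*j.1 := rfl
          have hv1 : (e1 j : Fin (2*n)).1 = 2*j.1+1 := rfl
          omega
        · exact hcross a ha b (List.mem_cons.2 (Or.inr hb'))
  -- now compute products
  rw [gammaS, gammaS, hsort', hL]
  rw [List.map_append, List.map_cons, List.prod_append, List.prod_cons,
      List.map_append, List.map_cons, List.prod_append, List.prod_cons]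
  rw [majorana_e1_eq]
  rw [smul_mul_assoc, mul_smul_comm]
  congr 1
  rw [mul_assoc (majorana n (e0 j)), Dmat_comm_list hqubL2]
  simp [mul_assoc]


def swapj {n : ℕ} (j : Fin n) (S : Finset (Fin (2*n))) : Finset (Fin (2*n)) :=
  if e0 j ∈ S then insert (e1 j) (S.erase (e0 j)) else insert (e0 j) (S.erase (e1 j))

def ExOne {n : ℕ} (j : Fin n) (S : Finset (Fin (2*n))) : Prop :=
  (e0 j ∈ S ∧ e1 j ∉ S) ∨ (e0 j ∉ S ∧ e1 j ∈ S)

lemma swapj_eq_of_mem {n : ℕ} {j : Fin n} {S : Finset (Fin (2*n))} (h0 : e0 j ∈ S) :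
    swapj j S = insert (e1 j) (S.erase (e0 j)) := if_pos h0

lemma swapj_eq_of_not_mem {n : ℕ} {j : Fin n} {S : Finset (Fin (2*n))} (h0 : e0 j ∉ S) :
    swapj j S = insert (e0 j) (S.erase (e1 j)) := if_neg h0

lemma swapj_exone {n : ℕ} {j : Fin n} {S : Finset (Fin (2*n))} (h : ExOne j S) :
    ExOne j (swapj j S) := by
  rcases h with ⟨h0, h1⟩ | ⟨h0, h1⟩
  · rw [swapj_eq_of_mem h0]
    right
    constructor
    · intro hmem
      rcases Finset.mem_insert.1 hmem with h' | h'
      · exact e0_ne_e1 j h'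
      · exact (Finset.mem_erase.1 h').1 rfl
    · exact Finset.mem_insert_self _ _
  · rw [swapj_eq_of_not_mem h0]
    left
    constructor
    · exact Finset.mem_insert_self _ _
    · intro hmem
      rcases Finset.mem_insert.1 hmem with h' | h'
      · exact e0_ne_e1 j h'.symm
      · exact (Finset.mem_erase.1 h').1 rfl

lemma swapj_invol {n : ℕ} {j : Fin n} {S : Finset (Fin (2*n))} (h : ExOne j S) :
    swapj j (swapj j S) = S := by
  rcases h with ⟨h0, h1⟩ | ⟨h0, h1⟩
  · rw [swapj_eq_of_mem h0]
    have he0 : e0 j ∉ insert (e1 j) (S.erase (e0 j)) := by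
      intro hmem
      rcases Finset.mem_insert.1 hmem with h' | h'
      · exact e0_ne_e1 j h'
      · exact (Finset.mem_erase.1 h').1 rfl
    rw [swapj_eq_of_not_mem he0]
    rw [Finset.erase_insert (fun hmem => h1 (Finset.mem_of_mem_erase hmem))]
    rw [Finset.insert_erase h0]
  · rw [swapj_eq_of_not_mem h0]
    have he0 : e0 j ∈ insert (e0 j) (S.erase (e1 j)) := Finset.mem_insert_self _ _
    rw [swapj_eq_of_mem he0]
    rw [Finset.erase_insert (fun hmem => h0 (Finset.mem_of_mem_erase hmem))]
    rw [Finset.insert_erase h1]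

lemma swapj_ne {n : ℕ} {j : Fin n} {S : Finset (Fin (2*n))} (h : ExOne j S) :
    swapj j S ≠ S := by
  rcases h with ⟨h0, h1⟩ | ⟨h0, h1⟩
  · rw [swapj_eq_of_mem h0]
    intro hEq
    exact h1 (hEq ▸ Finset.mem_insert_self _ _)
  · rw [swapj_eq_of_not_mem h0]
    intro hEq
    exact h0 (hEq ▸ Finset.mem_insert_self _ _)

lemma swapj_card {n : ℕ} {j : Fin n} {S : Finset (Fin (2*n))} (h : ExOne j S) :
    (swapj j S).card = S.card := by
  rcases h with ⟨h0, h1⟩ | ⟨h0, h1⟩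
  · rw [swapj_eq_of_mem h0]
    rw [Finset.card_insert_of_notMem (fun hmem => h1 (Finset.mem_of_mem_erase hmem))]
    rw [Finset.card_erase_of_mem h0]
    have : 1 ≤ S.card := Finset.card_pos.2 ⟨_, h0⟩
    omega
  · rw [swapj_eq_of_not_mem h0]
    rw [Finset.card_insert_of_notMem (fun hmem => h0 (Finset.mem_of_mem_erase hmem))]
    rw [Finset.card_erase_of_mem h1]
    have : 1 ≤ S.card := Finset.card_pos.2 ⟨_, h1⟩
    omega

lemma swapj_mask {n : ℕ} {j : Fin n} {S : Finset (Fin (2*n))} (h : ExOne j S) :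
    maskS n (swapj j S) = maskS n S := by
  have hmem : ∀ μ : Fin (2*n), qub n μ ≠ j → (μ ∈ swapj j S ↔ μ ∈ S) := by
    intro μ hμ
    have hμ0 : μ ≠ e0 j := fun h' => hμ (h' ▸ qub_e0 j)
    have hμ1 : μ ≠ e1 j := fun h' => hμ (h' ▸ qub_e1 j)
    rcases h with ⟨h0, h1⟩ | ⟨h0, h1⟩
    · rw [swapj_eq_of_mem h0]
      simp [Finset.mem_insert, Finset.mem_erase, hμ0, hμ1]
    · rw [swapj_eq_of_not_mem h0]
      simp [Finset.mem_insert, Finset.mem_erase, hμ0, hμ1]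
  funext k
  by_cases hk : k = j
  · subst hk
    have h' := swapj_exone h
    simp only [maskS]
    rw [fiber_card, fiber_card]
    rcases h with ⟨h0, h1⟩ | ⟨h0, h1⟩ <;> rcases h' with ⟨h0', h1'⟩ | ⟨h0', h1'⟩ <;>
      simp [h0, h1, h0', h1']
  · simp only [maskS]
    have : (swapj j S).filter (fun μ => qub n μ = k) = S.filter (fun μ => qub n μ = k) := by
      ext μ
      simp only [Finset.mem_filter]
      constructor
      · rintro ⟨hm, hq⟩
        refine ⟨(hmem μ ?_).1 hm, hq⟩
        rw [hq]; exact hk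
      · rintro ⟨hm, hq⟩
        refine ⟨(hmem μ ?_).2 hm, hq⟩
        rw [hq]; exact hk
    rw [this]

lemma cancel_core {n : ℕ} {j : Fin n} (S : Finset (Fin (2*n)))
    (h0 : e0 j ∈ S) (h1 : e1 j ∉ S) (i0 x y : Fin n → Bool) (hyj : y j = true) :
    (starRingEnd ℂ) (gammaS n (insert (e1 j) (S.erase (e0 j))) i0 (fun _ => false)) *
        gammaS n (insert (e1 j) (S.erase (e0 j))) x y
      + (starRingEnd ℂ) (gammaS n S i0 (fun _ => false)) * gammaS n S x y = 0 := by
  rw [gammaS_swap j S h0 h1]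
  rw [Matrix.smul_apply, Matrix.smul_apply]
  rw [Dmat, Matrix.mul_diagonal, Matrix.mul_diagonal]
  have hz : ((fun (_ : Fin n) => false) j = true) = False := by simp
  simp only [hyj, hz, if_true, if_false, ite_true, ite_false, smul_eq_mul, _root_.map_mul,
    Complex.conj_I, mul_one, _root_.map_one]
  set z := gammaS n S i0 (fun _ => false)
  set w := gammaS n S x y
  linear_combination ((starRingEnd ℂ) z * w) * Complex.I_sq

lemma swapj_cancel {n : ℕ} {j : Fin n} {S : Finset (Fin (2*n))} (h : ExOne j S)
    (i0 x y : Fin n → Bool) (hyj : y j = true) :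
    (starRingEnd ℂ) (gammaS n (swapj j S) i0 (fun _ => false)) * gammaS n (swapj j S) x y
      + (starRingEnd ℂ) (gammaS n S i0 (fun _ => false)) * gammaS n S x y = 0 := by
  rcases h with ⟨h0, h1⟩ | ⟨h0, h1⟩
  · rw [swapj_eq_of_mem h0]
    exact cancel_core S h0 h1 i0 x y hyj
  · rw [swapj_eq_of_not_mem h0]
    set S' := insert (e0 j) (S.erase (e1 j)) with hS'
    have h0' : e0 j ∈ S' := Finset.mem_insert_self _ _
    have h1' : e1 j ∉ S' := by
      intro hmem
      rcases Finset.mem_insert.1 hmem with h' | h'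
      · exact e0_ne_e1 j h'.symm
      · exact (Finset.mem_erase.1 h').1 rfl
    have hback : insert (e1 j) (S'.erase (e0 j)) = S := by
      rw [hS', Finset.erase_insert (fun hmem => h0 (Finset.mem_of_mem_erase hmem))]
      rw [Finset.insert_erase h1]
    have hcc := cancel_core S' h0' h1' i0 x y hyj
    rw [hback] at hcc
    rw [add_comm]
    exact hcc

lemma card_eq_fiber_sum {n : ℕ} (S : Finset (Fin (2*n))) :
    S.card = ∑ j : Fin n, (S.filter fun μ => qub n μ = j).card :=
  Finset.card_eq_sum_card_fiberwise (fun x _ => Finset.mem_univ _)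

lemma mask_true_fiber_odd {n : ℕ} {S : Finset (Fin (2*n))} {i : Fin n → Bool} {j : Fin n}
    (hm : maskS n S = i) (hj : i j = true) :
    (S.filter fun μ => qub n μ = j).card % 2 = 1 := by
  have := congrFun hm j
  simp only [maskS] at this
  rw [hj] at this
  exact of_decide_eq_true this

lemma mask_exone {n : ℕ} {S : Finset (Fin (2*n))} {i : Fin n → Bool} {j : Fin n}
    (hm : maskS n S = i) (hj : i j = true) : ExOne j S := by
  have hodd := mask_true_fiber_odd hm hj
  rw [fiber_card] at hodd
  by_cases h0 : e0 j ∈ S <;> by_cases h1 : e1 j ∈ S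
  · rw [if_pos h0, if_pos h1] at hodd; omega
  · exact Or.inl ⟨h0, h1⟩
  · exact Or.inr ⟨h0, h1⟩
  · rw [if_neg h0, if_neg h1] at hodd; omega

lemma counting_empty (n ζ l : ℕ) (hζeven : Even ζ) (hl : l < ζ/2) (i : Fin n → Bool)
    (hi : hamming i = ζ) :
    (Finset.univ.filter fun S : Finset (Fin (2*n)) => S.card = 2*l ∧ maskS n S = i) = ∅ := by
  rw [Finset.eq_empty_iff_forall_notMem]
  intro S hS
  rw [Finset.mem_filter] at hS
  obtain ⟨-, hcard, hmask⟩ := hS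
  have hbound : ζ ≤ S.card := by
    rw [card_eq_fiber_sum S]
    calc ζ = (Finset.univ.filter fun j => i j = true).card := hi.symm
    _ = ∑ j ∈ Finset.univ.filter (fun j => i j = true), 1 := by
        rw [Finset.sum_const, smul_eq_mul, mul_one]
    _ ≤ ∑ j ∈ Finset.univ.filter (fun j => i j = true),
          (S.filter fun μ => qub n μ = j).card := by
        apply Finset.sum_le_sum
        intro j hj
        have := mask_true_fiber_odd hmask (Finset.mem_filter.1 hj).2
        omega
    _ ≤ ∑ j : Fin n, (S.filter fun μ => qub n μ = j).card := by
        apply Finset.sum_le_sum_of_subset (Finset.filter_subset _ _)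
  obtain ⟨k, hk⟩ := hζeven
  omega

lemma counting (n ζ l : ℕ) (hζeven : Even ζ) (hl : ζ/2 ≤ l) (i : Fin n → Bool)
    (hi : hamming i = ζ) :
    (Finset.univ.filter fun S : Finset (Fin (2*n)) => S.card = 2*l ∧ maskS n S = i).card
      = 2^ζ * (n-ζ).choose (l - ζ/2) := by
  classical
  obtain ⟨k0, hk0⟩ : ∃ k, ζ = 2*k := by obtain ⟨k, hk⟩ := hζeven; exact ⟨k, by omega⟩
  set m := l - ζ/2 with hm
  have hsuppcard : (Finset.univ.filter (fun j : Fin n => i j = true)).card = ζ := hi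
  have hcsuppcard : (Finset.univ.filter (fun j : Fin n => ¬ (i j = true))).card = n - ζ := by
    have h2 := Finset.card_filter_add_card_filter_not
      (s := (Finset.univ : Finset (Fin n))) (p := fun j => i j = true)
    have hcu : (Finset.univ : Finset (Fin n)).card = n :=
      Finset.card_univ.trans (Fintype.card_fin n)
    have hzn : ζ ≤ n := by
      have h3 := Finset.card_filter_le (Finset.univ : Finset (Fin n)) (fun j => i j = true)
      omega
    omega
  set P := (Finset.univ.filter (fun j : Fin n => i j = true)).powerset
    ×ˢ (Finset.univ.filter (fun j : Fin n => ¬ (i j = true))).powersetCard m with hP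
  have hPcard : P.card = 2^ζ * (n-ζ).choose m := by
    rw [hP, Finset.card_product, Finset.card_powerset, Finset.card_powersetCard,
      hsuppcard, hcsuppcard]
  rw [← hPcard]
  symm
  set Ψ : Finset (Fin n) × Finset (Fin n) → Finset (Fin (2*n)) := fun AT =>
    Finset.univ.filter (fun μ =>
      if i (qub n μ) = true then ((μ.1 % 2 = 1) ↔ qub n μ ∈ AT.1) else qub n μ ∈ AT.2) with hΨ
  have hme0 : ∀ (j : Fin n), ¬ (((e0 j : Fin (2*n)) : ℕ) % 2 = 1) := by
    intro j
    have hval : ((e0 j : Fin (2*n)) : ℕ) = 2*j.1 := rfl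
    omega
  have hme1 : ∀ (j : Fin n), ((e1 j : Fin (2*n)) : ℕ) % 2 = 1 := by
    intro j
    have hval : ((e1 j : Fin (2*n)) : ℕ) = 2*j.1+1 := rfl
    omega
  have hmem0 : ∀ A T (j : Fin n), (e0 j ∈ Ψ (A, T)) ↔ (if i j = true then j ∉ A else j ∈ T) := by
    intro A T j
    simp only [hΨ, Finset.mem_filter, Finset.mem_univ, true_and, qub_e0]
    by_cases hij : i j = true
    · rw [if_pos hij, if_pos hij]
      have := hme0 j
      tauto
    · rw [if_neg hij, if_neg hij]
  have hmem1 : ∀ A T (j : Fin n), (e1 j ∈ Ψ (A, T)) ↔ (if i j = true then j ∈ A else j ∈ T) := by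
    intro A T j
    simp only [hΨ, Finset.mem_filter, Finset.mem_univ, true_and, qub_e1]
    by_cases hij : i j = true
    · rw [if_pos hij, if_pos hij]
      have := hme1 j
      tauto
    · rw [if_neg hij, if_neg hij]
  have hfib : ∀ A T (j : Fin n), ((Ψ (A,T)).filter fun μ => qub n μ = j).card
      = if i j = true then 1 else (if j ∈ T then 2 else 0) := by
    intro A T j
    rw [fiber_card]
    by_cases hij : i j = true
    · rw [if_pos hij]
      by_cases hA' : j ∈ A
      · rw [if_neg (by rw [hmem0 A T j, if_pos hij]; simpa using hA'),
            if_pos (by rw [hmem1 A T j, if_pos hij]; exact hA')]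
      · rw [if_pos (by rw [hmem0 A T j, if_pos hij]; exact hA'),
            if_neg (by rw [hmem1 A T j, if_pos hij]; exact hA')]
    · rw [if_neg hij]
      by_cases hT' : j ∈ T
      · rw [if_pos (by rw [hmem0 A T j, if_neg hij]; exact hT'),
            if_pos (by rw [hmem1 A T j, if_neg hij]; exact hT'), if_pos hT']
      · rw [if_neg (by rw [hmem0 A T j, if_neg hij]; exact hT'),
            if_neg (by rw [hmem1 A T j, if_neg hij]; exact hT'), if_neg hT']
  apply Finset.card_bij (fun AT _ => Ψ AT)
  · -- maps into the target filter
    rintro ⟨A, T⟩ hAT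
    rw [hP, Finset.mem_product] at hAT
    obtain ⟨hA, hT⟩ := hAT
    rw [Finset.mem_powerset] at hA
    rw [Finset.mem_powersetCard] at hT
    obtain ⟨hTsub, hTcard⟩ := hT
    rw [Finset.mem_filter]
    refine ⟨Finset.mem_univ _, ?_, ?_⟩
    · -- cardinality is 2l
      rw [card_eq_fiber_sum (Ψ (A,T))]
      have hsplit : ∀ j : Fin n, ((Ψ (A,T)).filter fun μ => qub n μ = j).card
          = (if i j = true then 1 else 0) + (if j ∈ T then 2 else 0) := by
        intro j
        rw [hfib A T j]
        by_cases hij : i j = true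
        · rw [if_pos hij, if_pos hij]
          have : j ∉ T := fun hmem => (Finset.mem_filter.1 (hTsub hmem)).2 hij
          rw [if_neg this]
        · rw [if_neg hij, if_neg hij, zero_add]
      rw [Finset.sum_congr rfl (fun j _ => hsplit j)]
      rw [Finset.sum_add_distrib]
      have h1 : (∑ j : Fin n, if i j = true then 1 else 0) = ζ := by
        rw [← Finset.card_filter]
        exact hsuppcard
      have h2 : (∑ j : Fin n, if j ∈ T then 2 else 0) = 2 * m := by
        rw [Finset.sum_ite_mem, Finset.univ_inter, Finset.sum_const, hTcard,
          smul_eq_mul]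
        ring
      rw [h1, h2]
      omega
    · -- mask is i
      funext j
      simp only [maskS]
      rw [hfib A T j]
      by_cases hij : i j = true
      · rw [if_pos hij, hij]
        norm_num
      · rw [if_neg hij]
        have hij' : i j = false := by revert hij; cases i j <;> simp
        rw [hij']
        by_cases hT' : j ∈ T
        · rw [if_pos hT']
          simp
        · rw [if_neg hT']
          simp
  · -- injective
    rintro ⟨A, T⟩ hAT ⟨A', T'⟩ hAT' hEq
    rw [hP, Finset.mem_product, Finset.mem_powerset, Finset.mem_powersetCard] at hAT hAT'
    obtain ⟨hA, hT, -⟩ := hAT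
    obtain ⟨hA', hT', -⟩ := hAT'
    have hAeq : A = A' := by
      ext j
      by_cases hij : i j = true
      · have m1 := hmem1 A T j
        have m2 := hmem1 A' T' j
        rw [hEq] at m1
        rw [if_pos hij] at m1 m2
        rw [← m1, m2]
      · constructor
        · intro hmem
          exact absurd ((Finset.mem_filter.1 (hA hmem)).2) hij
        · intro hmem
          exact absurd ((Finset.mem_filter.1 (hA' hmem)).2) hij
    have hTeq : T = T' := by
      ext j
      by_cases hij : i j = true
      · constructor
        · intro hmem
          exact absurd ((Finset.mem_filter.1 (hT hmem)).2 hij).elim id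
        · intro hmem
          exact absurd ((Finset.mem_filter.1 (hT' hmem)).2 hij).elim id
      · have m1 := hmem1 A T j
        have m2 := hmem1 A' T' j
        rw [hEq] at m1
        rw [if_neg hij] at m1 m2
        rw [← m1, m2]
    rw [Prod.mk.injEq]
    exact ⟨hAeq, hTeq⟩
  · -- surjective
    intro S hS
    rw [Finset.mem_filter] at hS
    obtain ⟨-, hcard, hmask⟩ := hS
    set A := (Finset.univ.filter (fun j : Fin n => i j = true)).filter
      (fun j => e1 j ∈ S) with hA
    set T := (Finset.univ.filter (fun j : Fin n => ¬ (i j = true))).filter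
      (fun j => e0 j ∈ S) with hT
    -- fibers of S
    have hfibS : ∀ j : Fin n, (S.filter fun μ => qub n μ = j).card
        = (if e0 j ∈ S then 1 else 0) + (if e1 j ∈ S then 1 else 0) := fun j => fiber_card n S j
    have hpattern : ∀ j : Fin n, i j = true →
        ((e0 j ∈ S ∧ e1 j ∉ S) ∨ (e0 j ∉ S ∧ e1 j ∈ S)) := fun j hj => mask_exone hmask hj
    have hboth : ∀ j : Fin n, ¬ (i j = true) → (e0 j ∈ S ↔ e1 j ∈ S) := by
      intro j hj
      have hthis := congrFun hmask j
      simp only [maskS] at hthis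
      have hj' : i j = false := by revert hj; cases i j <;> simp
      rw [hj'] at hthis
      have heven := of_decide_eq_false hthis
      rw [fiber_card] at heven
      by_cases h0 : e0 j ∈ S <;> by_cases h1 : e1 j ∈ S
      · exact iff_of_true h0 h1
      · rw [if_pos h0, if_neg h1] at heven; omega
      · rw [if_neg h0, if_pos h1] at heven; omega
      · exact iff_of_false h0 h1
    have hAmem : ∀ j : Fin n, j ∈ A ↔ (i j = true ∧ e1 j ∈ S) := by
      intro j
      rw [hA]
      simp only [Finset.mem_filter, Finset.mem_univ, true_and]
    have hTmem : ∀ j : Fin n, j ∈ T ↔ (¬ (i j = true) ∧ e0 j ∈ S) := by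
      intro j
      rw [hT]
      simp only [Finset.mem_filter, Finset.mem_univ, true_and]
    have hSeq : S = Ψ (A, T) := by
      ext μ
      rcases eq_e0_or_e1 (qub n μ) μ rfl with hq | hq
      · rw [hq, hmem0 A T (qub n μ)]
        set j := qub n μ
        by_cases hij : i j = true
        · rw [if_pos hij]
          rcases hpattern j hij with ⟨h0, h1⟩ | ⟨h0, h1⟩
          · exact iff_of_true h0 (fun hmem => h1 (hAmem j |>.1 hmem).2)
          · exact iff_of_false h0 (fun hmem => hmem ((hAmem j).2 ⟨hij, h1⟩))
        · rw [if_neg hij, hTmem j]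
          exact ⟨fun h => ⟨hij, h⟩, fun h => h.2⟩
      · rw [hq, hmem1 A T (qub n μ)]
        set j := qub n μ
        by_cases hij : i j = true
        · rw [if_pos hij, hAmem j]
          exact ⟨fun h => ⟨hij, h⟩, fun h => h.2⟩
        · rw [if_neg hij, hTmem j]
          have hb := hboth j hij
          exact ⟨fun h => ⟨hij, hb.2 h⟩, fun h => hb.1 h.2⟩
    refine ⟨(A, T), ?_, hSeq.symm⟩
    rw [hP, Finset.mem_product, Finset.mem_powerset, Finset.mem_powersetCard]
    refine ⟨Finset.filter_subset _ _, Finset.filter_subset _ _, ?_⟩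
    -- card T = m
    have hcards : 2*l = ζ + 2 * T.card := by
      rw [← hcard, card_eq_fiber_sum S]
      have hsplit : ∀ j : Fin n, (S.filter fun μ => qub n μ = j).card
          = (if i j = true then 1 else 0) + (if j ∈ T then 2 else 0) := by
        intro j
        rw [hfibS j]
        by_cases hij : i j = true
        · have hjT : j ∉ T := by
            rw [hT]
            simp only [Finset.mem_filter, Finset.mem_univ, true_and]
            intro hcon
            exact hcon.1 hij
          rw [if_pos hij, if_neg hjT]
          rcases hpattern j hij with ⟨h0, h1⟩ | ⟨h0, h1⟩
          · rw [if_pos h0, if_neg h1]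
          · rw [if_neg h0, if_pos h1]
        · have hjT : j ∈ T ↔ e0 j ∈ S := by
            rw [hT]
            simp only [Finset.mem_filter, Finset.mem_univ, true_and]
            constructor
            · exact fun h => h.2
            · exact fun h => ⟨hij, h⟩
          rw [if_neg hij, zero_add]
          by_cases h0 : e0 j ∈ S
          · rw [if_pos h0, if_pos ((hboth j hij).1 h0), if_pos (hjT.2 h0)]
          · rw [if_neg h0, if_neg (fun h1 => h0 ((hboth j hij).2 h1)),
              if_neg (fun hh => h0 (hjT.1 hh))]
      rw [Finset.sum_congr rfl (fun j _ => hsplit j)]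
      rw [Finset.sum_add_distrib]
      have h1 : (∑ j : Fin n, if i j = true then 1 else 0) = ζ := by
        rw [← Finset.card_filter]
        exact hsuppcard
      have h2 : (∑ j : Fin n, if j ∈ T then 2 else 0) = 2 * T.card := by
        rw [Finset.sum_ite_mem, Finset.univ_inter, Finset.sum_const, smul_eq_mul]
        ring
      rw [h1, h2]
    show T.card = m
    omega


lemma trace_outer_ket (n : ℕ) (A : QOp n) (u v : Fin n → Bool) :
    Matrix.trace (Aᴴ * outer (ket n u) (ket n v)) = (starRingEnd ℂ) (A u v) := by
  rw [Matrix.trace]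
  simp only [Matrix.diag_apply, Matrix.mul_apply, Matrix.conjTranspose_apply, outer, ket,
    Matrix.of_apply, apply_ite (starRingEnd ℂ), _root_.map_one, _root_.map_zero, mul_ite,
    ite_mul, mul_one, mul_zero, zero_mul, one_mul]
  rw [Finset.sum_comm]
  rw [Finset.sum_eq_single u]
  · rw [Finset.sum_eq_single v]
    · simp
    · intro b _ hb
      simp [hb]
    · intro h
      exact absurd (Finset.mem_univ _) h
  · intro b _ hb
    apply Finset.sum_eq_zero
    intro c _
    simp [hb]
  · intro h
    exact absurd (Finset.mem_univ _) h

lemma proj_entry (n ζ : ℕ) (M : QOp n) (x y : Fin n → Bool) :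
    (projZeroZeta n ζ * M * projZeroZeta n ζ) x y
      = (if x = (fun _ => false) ∨ hamming x = ζ then 1 else 0) * M x y *
        (if y = (fun _ => false) ∨ hamming y = ζ then 1 else 0) := by
  rw [projZeroZeta, Matrix.mul_diagonal, Matrix.diagonal_mul]


/-- for a computational basis state `|i⟩` of Hamming weight `ζ`,
`𝒫_{0,ζ}[Π_{2l}(|i⟩⟨0…0|)] = b_{2l} |i⟩⟨0…0|`. -/
theorem eigen_operator_basis_state (n ζ : ℕ) (hn : 1 ≤ n) (hζ0 : 0 < ζ) (hζn : ζ ≤ n)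
    (hζeven : Even ζ) (i : Fin n → Bool) (hi : hamming i = ζ) :
    ∀ l : ℕ, l ≤ n →
      projZeroZeta n ζ * PiEven n l (outer (ket n i) (ket0 n)) * projZeroZeta n ζ
        = bcoef n ζ l • outer (ket n i) (ket0 n) := by
  intro l hl
  classical
  obtain ⟨k0, hk0⟩ : ∃ k, ζ = 2*k := by obtain ⟨k, hk⟩ := hζeven; exact ⟨k, by omega⟩
  have hζ2 : ζ/2 = k0 := by omega
  have hket0 : ket0 n = ket n (fun _ => false) := rfl
  set zV : Fin n → Bool := (fun _ => false) with hzV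
  set c : Finset (Fin (2*n)) → ℂ := fun S => (starRingEnd ℂ) (gammaS n S i zV) with hc
  set F2 := Finset.univ.filter
    (fun S : Finset (Fin (2*n)) => S.card = 2*l ∧ maskS n S = i) with hF2
  have hrestrict : ∀ x y : Fin n → Bool,
      (∑ S ∈ Finset.univ.filter (fun S : Finset (Fin (2*n)) => S.card = 2*l),
        c S * gammaS n S x y) = ∑ S ∈ F2, c S * gammaS n S x y := by
    intro x y
    symm
    apply Finset.sum_subset
    · intro S hS
      rw [hF2, Finset.mem_filter] at hS
      rw [Finset.mem_filter]
      exact ⟨hS.1, hS.2.1⟩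
    · intro S hS1 hS2
      rw [Finset.mem_filter] at hS1
      rw [hF2, Finset.mem_filter] at hS2
      have hmaskne : maskS n S ≠ i := by tauto
      have hzero : gammaS n S i zV = 0 := by
        apply (gammaS_mono n S).1
        intro hcon
        apply hmaskne
        funext k
        have h := congrFun hcon k
        simp only [bx, hzV, Bool.xor_false] at h
        exact h.symm
      rw [hc]
      simp only [hzero, map_zero, zero_mul]
  have hmain : ∀ S ∈ F2, c S * gammaS n S i zV = 1 := by
    intro S hS
    rw [hF2, Finset.mem_filter] at hS
    obtain ⟨-, -, hmask⟩ := hS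
    have hbxi : bx (maskS n S) zV = i := by
      funext k
      simp only [bx, hzV, Bool.xor_false]
      rw [hmask]
    have hu := (gammaS_mono n S).2 zV
    rw [hbxi] at hu
    rw [hc]
    calc (starRingEnd ℂ) (gammaS n S i zV) * gammaS n S i zV
        = gammaS n S i zV * (starRingEnd ℂ) (gammaS n S i zV) := mul_comm _ _
      _ = 1 := hu
  ext x y
  rw [Matrix.smul_apply, smul_eq_mul]
  have hout : outer (ket n i) (ket0 n) x y = if x = i ∧ y = zV then 1 else 0 := by
    by_cases hx : x = i <;> by_cases hy : y = zV <;>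
      simp [outer, ket, ket0, hzV, hx, hy]
  have hmid : (∑ S ∈ Finset.univ.filter (fun S : Finset (Fin (2*n)) => S.card = 2*l),
      Matrix.trace ((gammaS n S)ᴴ * outer (ket n i) (ket0 n)) • gammaS n S) x y
      = ∑ S ∈ F2, c S * gammaS n S x y := by
    rw [Matrix.sum_apply]
    rw [← hrestrict x y]
    apply Finset.sum_congr rfl
    intro S hS
    rw [Matrix.smul_apply, smul_eq_mul]
    congr 1
    rw [hket0, trace_outer_ket, hc]
  rw [PiEven, Matrix.mul_smul, Matrix.smul_mul, Matrix.smul_apply, proj_entry, hmid,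
    smul_eq_mul, hout]
  by_cases hxy : x = i ∧ y = zV
  · obtain ⟨hx, hy⟩ := hxy
    rw [hx, hy]
    rw [if_pos (Or.inr hi), if_pos (Or.inl hzV), one_mul, mul_one,
      if_pos ⟨rfl, rfl⟩, mul_one]
    have hsum1 : ∑ S ∈ F2, c S * gammaS n S i zV = (F2.card : ℂ) := by
      rw [Finset.sum_congr rfl hmain, Finset.sum_const, nsmul_eq_mul, mul_one]
    rw [hsum1]
    have h2n : (2:ℂ)^n ≠ 0 := pow_ne_zero _ two_ne_zero
    by_cases hlge : ζ/2 ≤ l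
    · have hcount : F2.card = 2^ζ * (n-ζ).choose (l - ζ/2) :=
        counting n ζ l hζeven hlge i hi
      rw [hcount, bcoef]
      by_cases hub : l + ζ/2 ≤ n
      · rw [if_pos ⟨hlge, hub⟩]
        push_cast
        field_simp
        try ring
      · rw [if_neg (fun h => hub h.2)]
        have hch : (n-ζ).choose (l - ζ/2) = 0 := Nat.choose_eq_zero_of_lt (by omega)
        rw [hch]
        push_cast
        ring
    · have hempty := counting_empty n ζ l hζeven (by omega) i hi
      rw [bcoef, if_neg (fun h => hlge h.1)]
      rw [hF2] at *
      rw [hempty]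
      simp
  · rw [if_neg hxy, mul_zero]
    by_cases hbx : x = bx i y
    · by_cases hpx : x = zV ∨ hamming x = ζ
      · by_cases hpy : y = zV ∨ hamming y = ζ
        · -- genuine cancellation case
          have hyne : y ≠ zV := by
            intro h
            apply hxy
            subst h
            refine ⟨?_, rfl⟩
            rw [hbx]
            funext k
            simp [bx, hzV]
          have hyham : hamming y = ζ := hpy.resolve_left hyne
          have hexj : ∃ j : Fin n, i j = true ∧ y j = true := by
            by_contra hno
            push_neg at hno
            have hdisj : Disjoint (Finset.univ.filter fun j : Fin n => i j = true)
                (Finset.univ.filter fun j : Fin n => y j = true) := by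
              rw [Finset.disjoint_left]
              intro j hj1 hj2
              exact absurd ((Finset.mem_filter.1 hj2).2)
                (by simpa using hno j (Finset.mem_filter.1 hj1).2)
            have hxham : hamming x = ζ + ζ := by
              rw [hamming]
              have hun : (Finset.univ.filter fun j : Fin n => x j = true)
                  = (Finset.univ.filter fun j : Fin n => i j = true)
                    ∪ (Finset.univ.filter fun j : Fin n => y j = true) := by
                ext j
                simp only [Finset.mem_filter, Finset.mem_univ, true_and, Finset.mem_union]
                have hnj := hno j
                constructor
                · intro hxj
                  rw [hbx] at hxj
                  simp only [bx] at hxj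
                  cases hij : i j
                  · rw [hij] at hxj
                    simp at hxj
                    exact Or.inr hxj
                  · exact Or.inl rfl
                · intro hor
                  rw [hbx]
                  simp only [bx]
                  rcases hor with h1 | h1
                  · have h2 : y j = false := by
                      cases hyj : y j
                      · rfl
                      · exact absurd hyj (hnj h1)
                    rw [h1, h2]
                    simp
                  · have h2 : i j = false := by
                      cases hij : i j
                      · rfl
                      · exact absurd h1 (hnj hij)
                    rw [h1, h2]
                    simp
              rw [hun, Finset.card_union_of_disjoint hdisj]
              have h1 : (Finset.univ.filter fun j : Fin n => i j = true).card = ζ := hi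
              have h2 : (Finset.univ.filter fun j : Fin n => y j = true).card = ζ := hyham
              rw [h1, h2]
            rcases hpx with hx0 | hxz
            · have : hamming x = 0 := by
                rw [hx0]
                simp [hamming, hzV]
              omega
            · omega
          obtain ⟨j, hij, hyj⟩ := hexj
          have hzsum : ∑ S ∈ F2, c S * gammaS n S x y = 0 := by
            apply Finset.sum_involution (fun S _ => swapj j S)
            · intro S hS
              have hex : ExOne j S :=
                mask_exone (Finset.mem_filter.1 (hF2 ▸ hS)).2.2 hij
              have hcan := swapj_cancel hex i x y hyj
              rw [add_comm]
              exact hcan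
            · intro S hS _
              exact swapj_ne (mask_exone (Finset.mem_filter.1 (hF2 ▸ hS)).2.2 hij)
            · intro S hS
              have hSf := Finset.mem_filter.1 (hF2 ▸ hS)
              have hex : ExOne j S := mask_exone hSf.2.2 hij
              rw [hF2, Finset.mem_filter]
              refine ⟨Finset.mem_univ _, ?_, ?_⟩
              · rw [swapj_card hex]
                exact hSf.2.1
              · rw [swapj_mask hex]
                exact hSf.2.2
            · intro S hS
              exact swapj_invol (mask_exone (Finset.mem_filter.1 (hF2 ▸ hS)).2.2 hij)
          rw [hzsum]
          ring
        · rw [if_neg hpy]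
          ring
      · rw [if_neg hpx]
        ring
    · have hterms : ∀ S ∈ F2, c S * gammaS n S x y = 0 := by
        intro S hS
        rw [hF2, Finset.mem_filter] at hS
        obtain ⟨-, -, hmask⟩ := hS
        have hzero : gammaS n S x y = 0 := by
          apply (gammaS_mono n S).1
          rw [hmask]
          exact hbx
        rw [hzero, mul_zero]
      rw [Finset.sum_eq_zero hterms]
      ring


end QCQMC

end
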